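/- For all integers r, s and all natural numbers n, the following identity holds: Δ·(Σ_{i=0}^{n} U_{r+2i}·U_{s+2i}) = a_{n+1}·V_{2n+r+s} − (n+1)·q^r·V_{s−r}. -/

import Mathlib

/-!
Two-sided solutions of `x n = p * x (n - 1) - q * x (n - 2)` with `q` a unit are determined by
their values at `0` and `1`. Comparing initial values gives the product formulas
`Δ U_k U_m = V_{m+k} - q^k V_{m-k}` and `U_k V_m = U_{m+k} - q^k U_{m-k}`. When `q² = 1`, the
first turns the summand into `V_{r+s+4i} - q^r V_{s-r}`, and the second (with `k = 2`) gives
`p V_m = U_{m+2} - U_{m-2}`, so `p ∑ V_{r+s+4i}` telescopes to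
`U_{2n+2} V_{2n+r+s} = p a_{n+1} V_{2n+r+s}`.
-/

open Finset

variable {R : Type*} [CommRing R] {p : R} {q : Rˣ}

-- `q` is a unit so that `q ^ k` makes sense for `k : ℤ` and the recurrence runs backwards.
def IsLucasRec (p : R) (q : Rˣ) (f : ℤ → R) : Prop :=
  ∀ n, f n = p * f (n - 1) - q * f (n - 2)

namespace IsLucasRec

variable {f g : ℤ → R}

lemma sub (hf : IsLucasRec p q f) (hg : IsLucasRec p q g) :
    IsLucasRec p q (fun n => f n - g n) := by
  intro n
  simp only [hf n, hg n]
  ring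

lemma neg (hf : IsLucasRec p q f) : IsLucasRec p q (fun n => -f n) := by
  intro n
  simp only [hf n]
  ring

lemma const_mul (hf : IsLucasRec p q f) (c : R) : IsLucasRec p q (fun n => c * f n) := by
  intro n
  simp only [hf n]
  ring

lemma comp_add (hf : IsLucasRec p q f) (k : ℤ) : IsLucasRec p q (fun n => f (n + k)) := by
  intro n
  dsimp only
  rw [hf, sub_add_eq_add_sub, sub_add_eq_add_sub]

lemma comp_sub (hf : IsLucasRec p q f) (k : ℤ) : IsLucasRec p q (fun n => f (n - k)) := by
  simpa only [sub_eq_add_neg] using hf.comp_add (-k)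

lemma zpow_mul_comp_neg (hf : IsLucasRec p q f) :
    IsLucasRec p q (fun n => (q ^ n : Rˣ) * f (-n)) := by
  intro n
  dsimp only
  have hn : ((q ^ n : Rˣ) : R) = (q ^ (n - 1) : Rˣ) * q := by
    rw [← Units.val_mul, ← zpow_add_one, sub_add_cancel]
  have hn2 : (q : R) * (q ^ (n - 2) : Rˣ) = (q ^ (n - 1) : Rˣ) := by
    rw [← Units.val_mul, ← zpow_one_add]
    ring_nf
  have hrec := hf (-n + 2)
  rw [show -n + 2 - 1 = -(n - 1) by ring, show -n + 2 - 2 = -n by ring,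
    show -n + 2 = -(n - 2) by ring] at hrec
  rw [hn]
  linear_combination f (-(n - 2)) * hn2 + ((q ^ (n - 1) : Rˣ) : R) * hrec

lemma ext (hf : IsLucasRec p q f) (hg : IsLucasRec p q g) (h0 : f 0 = g 0) (h1 : f 1 = g 1) :
    f = g := by
  suffices ∀ n : ℤ, f n = g n ∧ f (n + 1) = g (n + 1) from funext fun n => (this n).1
  intro n
  induction n using Int.induction_on with
  | zero => exact ⟨h0, by simpa using h1⟩
  | succ k ih =>
    refine ⟨ih.2, ?_⟩
    rw [hf, hg, add_sub_cancel_right, show (k : ℤ) + 1 + 1 - 2 = k by ring, ih.1, ih.2]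
  | pred k ih =>
    refine ⟨?_, by rw [sub_add_cancel]; exact ih.1⟩
    have hf' := hf (-k + 1)
    have hg' := hg (-k + 1)
    rw [add_sub_cancel_right, show -(k : ℤ) + 1 - 2 = -k - 1 by ring] at hf' hg'
    rw [← Units.mul_right_inj q]
    linear_combination hf' - hg' - ih.2 + p * ih.1

end IsLucasRec

structure IsLucasPair (p : R) (q : Rˣ) (U V : ℤ → R) : Prop where
  u_zero : U 0 = 0
  u_one : U 1 = 1
  u_rec : IsLucasRec p q U
  v_zero : V 0 = 2
  v_one : V 1 = p
  v_rec : IsLucasRec p q V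

namespace IsLucasPair

variable {U V : ℤ → R}

lemma u_two (h : IsLucasPair p q U V) : U 2 = p := by
  simpa [h.u_zero, h.u_one] using h.u_rec 2

lemma zpow_mul_u_neg (h : IsLucasPair p q U V) (k : ℤ) : (q ^ k : Rˣ) * U (-k) = -U k := by
  refine congrFun (h.u_rec.zpow_mul_comp_neg.ext h.u_rec.neg ?_ ?_) k
  · simp [h.u_zero]
  · have h1 := h.u_rec 1
    rw [sub_self, h.u_zero, h.u_one, show (1 : ℤ) - 2 = -1 by norm_num] at h1
    simp only [zpow_one, h.u_one]
    linear_combination h1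

lemma zpow_mul_v_neg (h : IsLucasPair p q U V) (k : ℤ) : (q ^ k : Rˣ) * V (-k) = V k := by
  refine congrFun (h.v_rec.zpow_mul_comp_neg.ext h.v_rec ?_ ?_) k
  · simp
  · have h1 := h.v_rec 1
    rw [sub_self, h.v_zero, h.v_one, show (1 : ℤ) - 2 = -1 by norm_num] at h1
    simp only [zpow_one, h.v_one]
    linear_combination h1

lemma disc_mul_u (h : IsLucasPair p q U V) (k : ℤ) :
    (p ^ 2 - 4 * q) * U k = V (k + 1) - q * V (k - 1) := by
  refine congrFun ((h.u_rec.const_mul _).ext ((h.v_rec.comp_add 1).sub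
    ((h.v_rec.comp_sub 1).const_mul _)) ?_ ?_) k
  · have := h.zpow_mul_v_neg 1
    simp only [zpow_one] at this
    simp [h.u_zero, h.v_one, this]
  · have h2 := h.v_rec 2
    norm_num [h.v_zero, h.v_one] at h2
    norm_num [h.u_one, h.v_zero, h2]
    ring

lemma u_mul_v (h : IsLucasPair p q U V) (k m : ℤ) :
    U k * V m = U (m + k) - (q ^ k : Rˣ) * U (m - k) := by
  refine congrFun ((h.v_rec.const_mul _).ext ((h.u_rec.comp_add k).sub
    ((h.u_rec.comp_sub k).const_mul _)) ?_ ?_) m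
  · simp only [h.v_zero, zero_add, zero_sub, h.zpow_mul_u_neg]
    ring
  · have hk := h.u_rec (k + 1)
    have hneg := h.zpow_mul_u_neg (k - 1)
    have hq : ((q ^ k : Rˣ) : R) = (q ^ (k - 1) : Rˣ) * q := by
      rw [← Units.val_mul, ← zpow_add_one, sub_add_cancel]
    rw [add_sub_cancel_right, show k + 1 - 2 = k - 1 by ring] at hk
    rw [h.v_one, add_comm, show 1 - k = -(k - 1) by ring, hq]
    linear_combination -hk + q * hneg

lemma disc_mul_u_mul_u (h : IsLucasPair p q U V) (k m : ℤ) :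
    (p ^ 2 - 4 * q) * (U k * U m) = V (m + k) - (q ^ k : Rˣ) * V (m - k) := by
  refine congrFun (((h.u_rec.const_mul (U k)).const_mul _).ext ((h.v_rec.comp_add k).sub
    ((h.v_rec.comp_sub k).const_mul _)) ?_ ?_) m
  · simp only [h.u_zero, zero_add, zero_sub, h.zpow_mul_v_neg]
    ring
  · have hneg := h.zpow_mul_v_neg (k - 1)
    have hq : ((q ^ k : Rˣ) : R) = (q ^ (k - 1) : Rˣ) * q := by
      rw [← Units.val_mul, ← zpow_add_one, sub_add_cancel]
    rw [h.u_one, add_comm, show 1 - k = -(k - 1) by ring, hq]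
    linear_combination h.disc_mul_u k + q * hneg

lemma mul_v_eq_u_add_two_sub (h : IsLucasPair p q U V) (hq : q ^ 2 = 1) (m : ℤ) :
    p * V m = U (m + 2) - U (m - 2) := by
  have := h.u_mul_v 2 m
  rwa [h.u_two, zpow_ofNat, hq, Units.val_one, one_mul] at this

lemma mul_sum_v (h : IsLucasPair p q U V) (hq : q ^ 2 = 1) (c : ℤ) (n : ℕ) :
    p * ∑ i ∈ range (n + 1), V (c + 4 * i) = U (2 * n + 2) * V (2 * n + c) := by
  have hterm : ∀ i : ℕ, p * V (c + 4 * i) = U (c + 4 * (i + 1 : ℕ) - 2) - U (c + 4 * i - 2) :=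
    fun i => by
      rw [h.mul_v_eq_u_add_two_sub hq]
      push_cast
      ring_nf
  have hq' : q ^ (2 * (n : ℤ) + 2) = 1 := by
    rw [show 2 * (n : ℤ) + 2 = 2 * (n + 1 : ℕ) by push_cast; ring, zpow_mul, zpow_ofNat, hq,
      one_zpow]
  rw [mul_sum, sum_congr rfl fun i _ => hterm i, sum_range_sub (fun i : ℕ => U (c + 4 * i - 2)),
    h.u_mul_v, hq', Units.val_one]
  push_cast
  ring_nf

lemma disc_mul_sum_u_mul_u (h : IsLucasPair p q U V) (hq : q ^ 2 = 1) (r s : ℤ) (n : ℕ) :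
    (p ^ 2 - 4 * q) * ∑ i ∈ range (n + 1), U (r + 2 * i) * U (s + 2 * i) =
      ∑ i ∈ range (n + 1), V (r + s + 4 * i) - (n + 1) * (q ^ r : Rˣ) * V (s - r) := by
  have hterm : ∀ i : ℕ, (p ^ 2 - 4 * q) * (U (r + 2 * i) * U (s + 2 * i)) =
      V (r + s + 4 * i) - (q ^ r : Rˣ) * V (s - r) := fun i => by
    rw [h.disc_mul_u_mul_u, zpow_add, zpow_mul, zpow_ofNat, hq, one_zpow, mul_one]
    ring_nf
  rw [mul_sum, sum_congr rfl fun i _ => hterm i, sum_sub_distrib, sum_const, card_range,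
    nsmul_eq_mul]
  push_cast
  ring

end IsLucasPair

lemma Int.units_pow_natAbs (u : ℤˣ) (r : ℤ) : (u : ℤ) ^ r.natAbs = (u ^ r : ℤˣ) := by
  obtain ⟨m, rfl | rfl⟩ := Int.eq_nat_or_neg r <;> simp [zpow_neg]

theorem stmt_6_general (p q : ℤ) (hp : p ≠ 0) (hq : q = 1 ∨ q = -1)
    (U V : ℤ → ℤ)
    (hU0 : U 0 = 0) (hU1 : U 1 = 1)
    (hUrec : ∀ n : ℤ, U n = p * U (n - 1) - q * U (n - 2))
    (hV0 : V 0 = 2) (hV1 : V 1 = p)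
    (hVrec : ∀ n : ℤ, V n = p * V (n - 1) - q * V (n - 2))
    (a : ℤ → ℤ) (ha : ∀ n : ℤ, p * a n = U (2 * n))
    (r s : ℤ) (n : ℕ) :
    (p ^ 2 - 4 * q) * (∑ i ∈ Finset.range (n + 1), U (r + 2 * i) * U (s + 2 * i)) =
      a ((n : ℤ) + 1) * V (2 * n + r + s) - ((n : ℤ) + 1) * q ^ r.natAbs * V (s - r) := by
  obtain ⟨u, rfl⟩ : ∃ u : ℤˣ, (u : ℤ) = q := by
    rcases hq with rfl | rfl
    exacts [⟨1, rfl⟩, ⟨-1, rfl⟩]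
  have h : IsLucasPair p u U V := ⟨hU0, hU1, hUrec, hV0, hV1, hVrec⟩
  have hsum : a (n + 1) * V (2 * n + r + s) = ∑ i ∈ range (n + 1), V (r + s + 4 * i) := by
    refine mul_left_cancel₀ hp ?_
    rw [h.mul_sum_v (Int.units_sq u), ← mul_assoc, ha, add_assoc]
    ring_nf
  rw [h.disc_mul_sum_u_mul_u (Int.units_sq u), hsum, Int.units_pow_natAbs]

theorem stmt_6 (p q : ℤ) (hp : p ≠ 0) (hq : q = 1 ∨ q = -1)
    (hΔ : p ^ 2 - 4 * q ≠ 0)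
    (U V : ℤ → ℤ)
    (hU0 : U 0 = 0) (hU1 : U 1 = 1)
    (hUrec : ∀ n : ℤ, U n = p * U (n - 1) - q * U (n - 2))
    (hV0 : V 0 = 2) (hV1 : V 1 = p)
    (hVrec : ∀ n : ℤ, V n = p * V (n - 1) - q * V (n - 2))
    (a : ℤ → ℤ) (ha : ∀ n : ℤ, p * a n = U (2 * n))
    (r s : ℤ) (n : ℕ) :
    (p ^ 2 - 4 * q) * (∑ i ∈ Finset.range (n + 1), U (r + 2 * i) * U (s + 2 * i)) =
      a ((n : ℤ) + 1) * V (2 * n + r + s) - ((n : ℤ) + 1) * q ^ r.natAbs * V (s - r) :=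
  stmt_6_general p q hp hq U V hU0 hU1 hUrec hV0 hV1 hVrec a ha r s n
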